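/- For K-vector subspaces U, W ⊆ Kⁿ of the same dimension, res(U) = res(W) if and only if for every u ∈ U there exists w ∈ W with rv(u) = rv(w). -/

import Mathlib

/-!
Rescaling `u` so that `vv u = 1` turns `rv u = rv w` into `res u = res w`; hence the condition on
the right is equivalent to `res U ⊆ res W`, for any subspaces. The sets `res U` are `K̄`-subspaces
of dimension `dim U`: lifts of independent residues are independent (divide a relation by its
coefficient of largest valuation and reduce), and conversely a vector `e ∈ U ∩ 𝒪ⁿ` with
`v(eᵢ) = 1` spans a complement of the slice `{xᵢ = 0}` both in `U` and in `res U`, so induction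
on the dimension applies. Equal dimensions then turn `res U ⊆ res W` into an equality.
-/

noncomputable section

open scoped Classical Pointwise

section Preamble

variable {K : Type*} [Field K] {Γ : Type*} [LinearOrderedCommGroupWithZero Γ]

instance (priority := 100) : OrderBot Γ where
  bot := 0
  bot_le _ := zero_le'

/-- The max-valuation on `K^n`: `v(a) = maxᵢ v(aᵢ)`. -/
def vv (v : Valuation K Γ) {n : ℕ} (x : Fin n → K) : Γ :=
  Finset.univ.sup fun i => v (x i)

/-- `rvEq v x y` expresses `rv(x) = rv(y)` in `RV⁽ⁿ⁾ = Kⁿ/∼`, where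
`x ∼ y` iff `v(x−y) < v(x)` or `x = y = 0`. -/
def rvEq (v : Valuation K Γ) {n : ℕ} (x y : Fin n → K) : Prop :=
  vv v (x - y) < vv v x ∨ (x = 0 ∧ y = 0)

/-- Balls in `K` (with `K` itself counting as a ball). -/
def IsBall1 (v : Valuation K Γ) (B : Set K) : Prop :=
  B = Set.univ ∨ ∃ a : K, ∃ γ : Γ, γ ≠ 0 ∧
    (B = {x | v (x - a) < γ} ∨ B = {x | v (x - a) ≤ γ})

/-- Balls in `Kⁿ` (with `Kⁿ` itself counting as a ball). -/
def IsBall (v : Valuation K Γ) {n : ℕ} (B : Set (Fin n → K)) : Prop :=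
  B = Set.univ ∨ ∃ a : Fin n → K, ∃ γ : Γ, γ ≠ 0 ∧
    (B = {x | vv v (x - a) < γ} ∨ B = {x | vv v (x - a) ≤ γ})

/-- Spherical completeness: every nonempty chain of balls in `K` has nonempty
intersection. -/
def SphericallyComplete (v : Valuation K Γ) : Prop :=
  ∀ C : Set (Set K), C.Nonempty → (∀ B ∈ C, IsBall1 v B) → IsChain (· ⊆ ·) C →
    (⋂ B ∈ C, B).Nonempty

/-- The residue field `K̄` of the valuation ring `𝒪 = {x | v x ≤ 1}`. -/
def Kbar (v : Valuation K Γ) : Type _ :=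
  IsLocalRing.ResidueField v.valuationSubring

instance (v : Valuation K Γ) : Field (Kbar v) :=
  inferInstanceAs (Field (IsLocalRing.ResidueField v.valuationSubring))

/-- The residue map `res : 𝒪 → K̄`, extended by the junk value `0` outside `𝒪`. -/
def res' (v : Valuation K Γ) (x : K) : Kbar v :=
  if h : v x ≤ 1 then IsLocalRing.residue v.valuationSubring ⟨x, h⟩ else 0

/-- The coordinatewise residue map on `Kⁿ`. -/
def resv (v : Valuation K Γ) {n : ℕ} (x : Fin n → K) : Fin n → Kbar v :=
  fun i => res' v (x i)

/-- `res(S)` for a set `S ⊆ Kⁿ`: the set of residues of points of `S ∩ 𝒪ⁿ`. -/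
def resSet (v : Valuation K Γ) {n : ℕ} (S : Set (Fin n → K)) : Set (Fin n → Kbar v) :=
  resv v '' {x ∈ S | ∀ i, v (x i) ≤ 1}

/-- `dir(x) = res(K·x) ⊆ K̄ⁿ`. -/
def dirSet (v : Valuation K Γ) {n : ℕ} (x : Fin n → K) : Set (Fin n → Kbar v) :=
  resSet v {y | ∃ c : K, y = c • x}

/-- The coordinate projection `Kⁿ → K^d` selecting the coordinates `σ 0 < σ 1 < ⋯`. -/
def proj {A : Type*} {n d : ℕ} (σ : Fin d → Fin n) (x : Fin n → A) : Fin d → A :=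
  fun k => x (σ k)

/-- `σ` (a strictly increasing selection of `d` of the `n` coordinates) is an
exhibition of the `K̄`-subspace `Ū ⊆ K̄ⁿ` if the corresponding coordinate projection
`K̄ⁿ → K̄^d` restricts to an isomorphism from `Ū` onto `K̄^d`. -/
def IsExhibition (v : Valuation K Γ) {n d : ℕ} (σ : Fin d → Fin n)
    (Ubar : Submodule (Kbar v) (Fin n → Kbar v)) : Prop :=
  StrictMono σ ∧ Set.BijOn (proj σ) (Ubar : Set (Fin n → Kbar v)) Set.univ

/-- `affdir(C)`: the `K̄`-subspace of `K̄ⁿ` generated by all `dir(x − x')`, `x, x' ∈ C`. -/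
def affdir (v : Valuation K Γ) {n : ℕ} (C : Set (Fin n → K)) :
    Submodule (Kbar v) (Fin n → Kbar v) :=
  Submodule.span (Kbar v) (⋃ x ∈ C, ⋃ x' ∈ C, dirSet v (x - x'))

/-- A matrix has entries in the valuation ring `𝒪`. -/
def EntriesInO (v : Valuation K Γ) {n : ℕ} (M : Matrix (Fin n) (Fin n) K) : Prop :=
  ∀ i j, v (M i j) ≤ 1

/-- `M ∈ GLₙ(𝒪)`: `M` is invertible, with entries in `𝒪`, and its inverse also has
entries in `𝒪`. -/
def MemGLO (v : Valuation K Γ) {n : ℕ} (M : Matrix (Fin n) (Fin n) K) : Prop :=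
  EntriesInO v M ∧ ∃ N : Matrix (Fin n) (Fin n) K,
    M * N = 1 ∧ N * M = 1 ∧ EntriesInO v N

/-- The entrywise residue matrix of `M`. -/
def resM (v : Valuation K Γ) {n : ℕ} (M : Matrix (Fin n) (Fin n) K) :
    Matrix (Fin n) (Fin n) (Kbar v) :=
  fun i j => res' v (M i j)

/-- `DeltaLE v U W γ` expresses `Δ(U, W) ≤ γ`: for every `u ∈ U` there is `w ∈ W`
with `v(u − w) ≤ v(u)·γ`. -/
def DeltaLE (v : Valuation K Γ) {n : ℕ} (U W : Submodule K (Fin n → K)) (γ : Γ) : Prop :=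
  ∀ u ∈ U, ∃ w ∈ W, vv v (u - w) ≤ vv v u * γ

/-- `IsDelta v U W γ` expresses `Δ(U, W) = γ`: `γ` is the minimum of all admissible
bounds. -/
def IsDelta (v : Valuation K Γ) {n : ℕ} (U W : Submodule K (Fin n → K)) (γ : Γ) : Prop :=
  DeltaLE v U W γ ∧ ∀ δ : Γ, DeltaLE v U W δ → γ ≤ δ

end Preamble

variable {K : Type*} [Field K] {Γ : Type*} [LinearOrderedCommGroupWithZero Γ]

open Module

theorem Submodule.finrank_inf_ker_add_one {F V : Type*} [Field F] [AddCommGroup V] [Module F V]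
    (f : V →ₗ[F] F) (S : Submodule F V) [FiniteDimensional F S] {e : V} (he : e ∈ S)
    (hfe : f e ≠ 0) : finrank F ↥(S ⊓ LinearMap.ker f) + 1 = finrank F S := by
  have hsup : S ⊓ LinearMap.ker f ⊔ F ∙ e = S := by
    refine le_antisymm (sup_le inf_le_left ((span_singleton_le_iff_mem _ _).2 he)) fun x hx => ?_
    have hx' : x - (f x / f e) • e ∈ S ⊓ LinearMap.ker f :=
      ⟨S.sub_mem hx (S.smul_mem _ he), by simp [hfe]⟩
    simpa using add_mem_sup hx' (mem_span_singleton.2 ⟨f x / f e, rfl⟩ : (f x / f e) • e ∈ F ∙ e)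
  have hinf : S ⊓ LinearMap.ker f ⊓ F ∙ e = ⊥ := by
    refine eq_bot_iff.2 fun x ⟨⟨_, hfx⟩, hxe⟩ => ?_
    obtain ⟨c, rfl⟩ := mem_span_singleton.1 hxe
    simp_all
  have := Submodule.finrank_sup_add_finrank_inf_eq (S ⊓ LinearMap.ker f) (F ∙ e)
  rw [hsup, hinf, finrank_bot, finrank_span_singleton (fun h => hfe (by simp [h]))] at this
  omega

section Valued

variable (v : Valuation K Γ) {n : ℕ}

theorem vv_le_iff {x : Fin n → K} {γ : Γ} : vv v x ≤ γ ↔ ∀ i, v (x i) ≤ γ :=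
  Finset.sup_le_iff.trans (by simp)

theorem vv_lt_iff {x : Fin n → K} {γ : Γ} (hγ : 0 < γ) : vv v x < γ ↔ ∀ i, v (x i) < γ :=
  (Finset.sup_lt_iff (by rwa [bot_eq_zero])).trans (by simp)

theorem apply_le_vv (x : Fin n → K) (i : Fin n) : v (x i) ≤ vv v x :=
  Finset.le_sup (f := fun j => v (x j)) (Finset.mem_univ i)

theorem vv_smul (c : K) (x : Fin n → K) : vv v (c • x) = v c * vv v x := by
  rw [vv, vv, Finset.apply_sup_eq_sup_comp_of_linearOrder (v c * ·)
    (fun _ _ h => mul_le_mul_right h _) (by simp [bot_eq_zero])]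
  simp [Function.comp_def]

theorem exists_apply_eq_vv {x : Fin n → K} (hx : x ≠ 0) : ∃ i, v (x i) = vv v x := by
  obtain ⟨j, -⟩ := Function.ne_iff.1 hx
  obtain ⟨i, -, hi⟩ := Finset.exists_mem_eq_sup Finset.univ ⟨j, Finset.mem_univ j⟩ fun i => v (x i)
  exact ⟨i, hi.symm⟩

theorem exists_smul_vv_eq_one {x : Fin n → K} (hx : x ≠ 0) :
    ∃ c : K, c ≠ 0 ∧ vv v (c • x) = 1 := by
  obtain ⟨i, hi⟩ := exists_apply_eq_vv v hx
  have hxi : x i ≠ 0 := by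
    obtain ⟨j, hj⟩ := Function.ne_iff.1 hx
    intro h0
    have := apply_le_vv v x j
    rw [← hi, h0, map_zero, le_zero_iff, map_eq_zero] at this
    exact hj this
  refine ⟨(x i)⁻¹, inv_ne_zero hxi, ?_⟩
  rw [vv_smul, ← hi, map_inv₀, inv_mul_cancel₀ ((map_ne_zero v).2 hxi)]

theorem rvEq.smul {x y : Fin n → K} (h : rvEq v x y) {c : K} (hc : c ≠ 0) :
    rvEq v (c • x) (c • y) := by
  rcases h with h | ⟨rfl, rfl⟩
  · left
    rw [← smul_sub, vv_smul, vv_smul]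
    exact mul_lt_mul_of_pos_left h (zero_lt_iff.2 ((map_ne_zero v).2 hc))
  · right
    simp

theorem res'_coe (a : v.valuationSubring) :
    res' v a = IsLocalRing.residue v.valuationSubring a :=
  dif_pos a.2

theorem exists_res'_eq (c : Kbar v) : ∃ a, v a ≤ 1 ∧ res' v a = c := by
  obtain ⟨a, rfl⟩ := IsLocalRing.residue_surjective c
  exact ⟨a, a.2, res'_coe v a⟩

theorem res'_eq_zero_iff {x : K} (hx : v x ≤ 1) : res' v x = 0 ↔ v x < 1 := by
  have h := (v.mem_maximalIdeal_iff (a := ⟨x, hx⟩))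
  rwa [← IsLocalRing.residue_eq_zero_iff, ← res'_coe] at h

theorem res'_add {x y : K} (hx : v x ≤ 1) (hy : v y ≤ 1) :
    res' v (x + y) = res' v x + res' v y := by
  have h := res'_coe v (⟨x, hx⟩ + ⟨y, hy⟩)
  rwa [map_add, ← res'_coe, ← res'_coe] at h

theorem res'_sub {x y : K} (hx : v x ≤ 1) (hy : v y ≤ 1) :
    res' v (x - y) = res' v x - res' v y := by
  have h := res'_coe v (⟨x, hx⟩ - ⟨y, hy⟩)
  rwa [map_sub, ← res'_coe, ← res'_coe] at h

theorem res'_mul {x y : K} (hx : v x ≤ 1) (hy : v y ≤ 1) :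
    res' v (x * y) = res' v x * res' v y := by
  have h := res'_coe v (⟨x, hx⟩ * ⟨y, hy⟩)
  rwa [map_mul, ← res'_coe, ← res'_coe] at h

theorem res'_sum {ι : Type*} (s : Finset ι) {f : ι → K} (hf : ∀ k, v (f k) ≤ 1) :
    res' v (∑ k ∈ s, f k) = ∑ k ∈ s, res' v (f k) := by
  have h := res'_coe v (∑ k ∈ s, ⟨f k, hf k⟩)
  push_cast at h
  simp only [map_sum, ← res'_coe] at h
  exact h

theorem res'_eq_res'_iff {x y : K} (hx : v x ≤ 1) (hy : v y ≤ 1) :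
    res' v x = res' v y ↔ v (x - y) < 1 := by
  rw [← sub_eq_zero, ← res'_sub v hx hy, res'_eq_zero_iff v (v.map_sub_le hx hy)]

theorem resv_eq_resv_iff {x y : Fin n → K} (hx : ∀ i, v (x i) ≤ 1) (hy : ∀ i, v (y i) ≤ 1) :
    resv v x = resv v y ↔ ∀ i, v (x i - y i) < 1 :=
  funext_iff.trans (forall_congr' fun i => res'_eq_res'_iff v (hx i) (hy i))

theorem resv_sum_smul {ι : Type*} [Fintype ι] {c : ι → K} {x : ι → Fin n → K}
    (hc : ∀ k, v (c k) ≤ 1) (hx : ∀ k i, v (x k i) ≤ 1) :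
    resv v (∑ k, c k • x k) = ∑ k, res' v (c k) • resv v (x k) := by
  funext i
  simp only [resv, Finset.sum_apply, Pi.smul_apply, smul_eq_mul]
  rw [res'_sum v _ fun k => (map_mul v _ _).trans_le (mul_le_one' (hc k) (hx k i))]
  exact Finset.sum_congr rfl fun k _ => res'_mul v (hc k) (hx k i)

theorem resv_zero : resv v (0 : Fin n → K) = 0 :=
  funext fun _ => (res'_eq_zero_iff v (by simp)).2 (by simp)

def resSubmodule (U : Submodule K (Fin n → K)) : Submodule (Kbar v) (Fin n → Kbar v) where
  carrier := resSet v U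
  add_mem' := by
    rintro _ _ ⟨x, ⟨hxU, hx⟩, rfl⟩ ⟨y, ⟨hyU, hy⟩, rfl⟩
    exact ⟨x + y, ⟨U.add_mem hxU hyU, fun i => v.map_add_le (hx i) (hy i)⟩,
      funext fun i => res'_add v (hx i) (hy i)⟩
  zero_mem' := ⟨0, ⟨U.zero_mem, fun i => by simp⟩, resv_zero v⟩
  smul_mem' := by
    rintro c _ ⟨x, ⟨hxU, hx⟩, rfl⟩
    obtain ⟨a, ha, rfl⟩ := exists_res'_eq v c
    exact ⟨a • x, ⟨U.smul_mem a hxU, fun i => (map_mul v _ _).trans_le (mul_le_one' ha (hx i))⟩,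
      funext fun i => res'_mul v ha (hx i)⟩

theorem linearIndependent_of_resv {ι : Type*} [Fintype ι] {x : ι → Fin n → K}
    (hx : ∀ k i, v (x k i) ≤ 1) (h : LinearIndependent (Kbar v) fun k => resv v (x k)) :
    LinearIndependent K x := by
  refine Fintype.linearIndependent_iff.2 fun g hg => ?_
  by_contra! hg0
  obtain ⟨j, hj⟩ := hg0
  obtain ⟨k, -, hk⟩ := Finset.exists_max_image Finset.univ (fun k => v (g k)) ⟨j, Finset.mem_univ j⟩
  have hgk : g k ≠ 0 := fun h0 => hj (by simpa [h0] using hk j (Finset.mem_univ j))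
  set c := fun l => (g k)⁻¹ * g l with hc_def
  have hc : ∀ l, v (c l) ≤ 1 := fun l => by
    rw [hc_def, map_mul, map_inv₀, inv_mul_le_iff₀ (zero_lt_iff.2 ((map_ne_zero v).2 hgk)), mul_one]
    exact hk l (Finset.mem_univ l)
  have hsum : ∑ l, c l • x l = 0 := by
    simp only [hc_def, mul_smul, ← Finset.smul_sum, hg, smul_zero]
  have hres : ∑ l, res' v (c l) • resv v (x l) = 0 := by
    rw [← resv_sum_smul v hc hx, hsum, resv_zero]
  have hck : res' v (c k) = 0 := Fintype.linearIndependent_iff.1 h _ hres k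
  simpa [hc_def, inv_mul_cancel₀ hgk] using (res'_eq_zero_iff v (hc k)).1 hck

theorem finrank_resSubmodule_le (U : Submodule K (Fin n → K)) :
    finrank (Kbar v) (resSubmodule v U) ≤ finrank K U := by
  let b := Module.finBasis (Kbar v) (resSubmodule v U)
  choose x hx hxb using fun k => (b k).2
  have hind : LinearIndependent K x := by
    refine linearIndependent_of_resv v (fun k => (hx k).2) ?_
    rw [show (fun k => resv v (x k)) = (resSubmodule v U).subtype ∘ b from funext hxb]
    exact b.linearIndependent.map' _ (resSubmodule v U).ker_subtype
  have hindU : LinearIndependent K fun k => (⟨x k, (hx k).1⟩ : U) :=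
    LinearIndependent.of_comp U.subtype hind
  simpa using hindU.fintype_card_le_finrank

theorem le_finrank_resSubmodule (U : Submodule K (Fin n → K)) :
    finrank K U ≤ finrank (Kbar v) (resSubmodule v U) := by
  induction hd : finrank K U generalizing U with
  | zero => exact Nat.zero_le _
  | succ d ih =>
    obtain ⟨u, huU, hu⟩ := U.exists_mem_ne_zero_of_ne_bot fun h => by subst h; simp at hd
    obtain ⟨c, hc, hcu⟩ := exists_smul_vv_eq_one v hu
    obtain ⟨i, hi⟩ := exists_apply_eq_vv v (smul_ne_zero hc hu)
    have he : ∀ j, v ((c • u) j) ≤ 1 := (vv_le_iff v).1 hcu.le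
    have hei : resv v (c • u) ∈ resSubmodule v U := ⟨c • u, ⟨U.smul_mem c huU, he⟩, rfl⟩
    have hvi : v ((c • u) i) = 1 := hi.trans hcu
    have hK := U.finrank_inf_ker_add_one (LinearMap.proj i) (U.smul_mem c huU)
      (v.ne_zero_iff.1 (hvi ▸ one_ne_zero))
    have hKbar := (resSubmodule v U).finrank_inf_ker_add_one (LinearMap.proj i) hei
      fun h0 => ((res'_eq_zero_iff v (he i)).1 h0).ne hvi
    have hslice : resSubmodule v (U ⊓ LinearMap.ker (LinearMap.proj i)) ≤
        resSubmodule v U ⊓ LinearMap.ker (LinearMap.proj i) := by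
      rintro _ ⟨x, ⟨⟨hxU, hxi⟩, hx⟩, rfl⟩
      exact ⟨⟨x, ⟨hxU, hx⟩, rfl⟩, (res'_eq_zero_iff v (hx i)).2 (by simp_all)⟩
    have := ih (U ⊓ LinearMap.ker (LinearMap.proj i)) (by omega)
    have := Submodule.finrank_mono hslice
    omega

theorem finrank_resSubmodule (U : Submodule K (Fin n → K)) :
    finrank (Kbar v) (resSubmodule v U) = finrank K U :=
  (finrank_resSubmodule_le v U).antisymm (le_finrank_resSubmodule v U)

theorem rvEq_of_resv_eq {x y : Fin n → K} (hx : vv v x = 1) (hy : ∀ i, v (y i) ≤ 1)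
    (h : resv v x = resv v y) : rvEq v x y :=
  Or.inl (hx ▸ (vv_lt_iff v one_pos).2 ((resv_eq_resv_iff v ((vv_le_iff v).1 hx.le) hy).1 h))

theorem resSet_subset_of_forall_rvEq {S T : Set (Fin n → K)}
    (h : ∀ x ∈ S, ∃ y ∈ T, rvEq v x y) : resSet v S ⊆ resSet v T := by
  rintro _ ⟨x, ⟨hxS, hx⟩, rfl⟩
  obtain ⟨y, hyT, hxy⟩ := h x hxS
  have hsub : ∀ i, v (x i - y i) < 1 := by
    rcases hxy with hlt | ⟨rfl, rfl⟩
    · exact (vv_lt_iff v one_pos).1 (hlt.trans_le ((vv_le_iff v).2 hx))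
    · simp
  have hy : ∀ i, v (y i) ≤ 1 := fun i => by
    simpa using v.map_sub_le (hx i) (hsub i).le
  exact ⟨y, ⟨hyT, hy⟩, ((resv_eq_resv_iff v hx hy).2 hsub).symm⟩

theorem forall_rvEq_of_resSet_subset {U W : Submodule K (Fin n → K)}
    (h : resSet v (U : Set (Fin n → K)) ⊆ resSet v (W : Set (Fin n → K))) :
    ∀ u ∈ U, ∃ w ∈ W, rvEq v u w := by
  intro u hu
  rcases eq_or_ne u 0 with rfl | hu0
  · exact ⟨0, W.zero_mem, Or.inr ⟨rfl, rfl⟩⟩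
  obtain ⟨c, hc, hcu⟩ := exists_smul_vv_eq_one v hu0
  obtain ⟨w, ⟨hwW, hw⟩, hres⟩ :=
    h ⟨c • u, ⟨U.smul_mem c hu, (vv_le_iff v).1 hcu.le⟩, rfl⟩
  refine ⟨c⁻¹ • w, W.smul_mem _ hwW, ?_⟩
  simpa [smul_smul, inv_mul_cancel₀ hc] using
    (rvEq_of_resv_eq v hcu hw hres.symm).smul v (inv_ne_zero hc)

theorem resSet_subset_iff_forall_rvEq {U W : Submodule K (Fin n → K)} :
    resSet v (U : Set (Fin n → K)) ⊆ resSet v (W : Set (Fin n → K)) ↔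
      ∀ u ∈ U, ∃ w ∈ W, rvEq v u w :=
  ⟨forall_rvEq_of_resSet_subset v, resSet_subset_of_forall_rvEq v⟩

end Valued

/-- for subspaces `U, W ⊆ Kⁿ` of the same dimension,
`res U = res W` iff every `u ∈ U` has the same leading term as some `w ∈ W`. -/
theorem resSet_eq_iff_rv
    (v : Valuation K Γ) {n : ℕ}
    (U W : Submodule K (Fin n → K))
    (hdim : Module.finrank K U = Module.finrank K W) :
    resSet v (U : Set (Fin n → K)) = resSet v (W : Set (Fin n → K)) ↔
      ∀ u ∈ U, ∃ w ∈ W, rvEq v u w := by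
  rw [← resSet_subset_iff_forall_rvEq]
  refine ⟨fun h => h.subset, fun h => ?_⟩
  have hle : resSubmodule v U ≤ resSubmodule v W := h
  exact congrArg SetLike.coe (Submodule.eq_of_le_of_finrank_eq hle
    (by rw [finrank_resSubmodule, finrank_resSubmodule, hdim]))
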